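/- Let H be a connected component of a graph G with e(H)/e(G) < ĥ_H. Then in every modularity-optimal partition of G, the vertex set V(H) is contained in a single part (H is not split). -/

import Mathlib

open Finset
open scoped Classical

noncomputable section

variable {V : Type*} [Fintype V]

/-- Number of edges between `A` and `B` (each cross edge counted once when `A`,`B` disjoint). -/
def ecut (G : SimpleGraph V) (A B : Finset V) : ℝ :=
  ((A ×ˢ B).filter fun p => G.Adj p.1 p.2).card

/-- Number of edges inside `A`. -/
def ein (G : SimpleGraph V) (A : Finset V) : ℝ := ecut G A A / 2

/-- Volume of a vertex set: sum of degrees. -/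
def gvol (G : SimpleGraph V) (A : Finset V) : ℝ := ∑ v ∈ A, (G.degree v : ℝ)

/-- Number of edges of `G`. -/
def edgecount (G : SimpleGraph V) : ℝ := (G.edgeFinset.card : ℝ)

/-- Conductance (Cheeger constant) `h_G`. -/
def conduct (G : SimpleGraph V) : ℝ :=
  sInf { x | ∃ A : Finset V, A.Nonempty ∧ A ≠ univ ∧
    x = ecut G A Aᶜ / min (gvol G A) (gvol G Aᶜ) }

/-- Expansion-by-products `ĥ_G`. -/
def hhat (G : SimpleGraph V) : ℝ :=
  sInf { x | ∃ A : Finset V, A.Nonempty ∧ A ≠ univ ∧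
    x = ecut G A Aᶜ * gvol G univ / (gvol G A * gvol G Aᶜ) }

/-- Modularity score of a vertex partition. -/
def modScore (G : SimpleGraph V) (P : Finpartition (univ : Finset V)) : ℝ :=
  (∑ A ∈ P.parts, ein G A) / edgecount G
    - (∑ A ∈ P.parts, (gvol G A) ^ 2) / (4 * (edgecount G) ^ 2)

/-- Modularity `q*(G)`: maximum modularity score over vertex partitions. -/
def modularity (G : SimpleGraph V) : ℝ :=
  sSup { x | ∃ P : Finpartition (univ : Finset V), x = modScore G P }

/-- Expansion-by-products of the subgraph of `G` on a vertex set `S` (all of whose edges stay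
inside `S` when `S` is a union of components): minimum over nonempty proper `U ⊆ S` of
`e(U, S∖U)·vol(S)/(vol(U)·vol(S∖U))`. -/
def hhatOn {V : Type*} [Fintype V] (G : SimpleGraph V) (S : Finset V) : ℝ :=
  sInf { x | ∃ U : Finset V, U ⊆ S ∧ U.Nonempty ∧ U ≠ S ∧
    x = ecut G U (S \ U) * gvol G S / (gvol G U * gvol G (S \ U)) }

set_option linter.unusedSectionVars false
set_option linter.unusedVariables false
set_option maxHeartbeats 1000000

lemma ecut_eq_sum (G : SimpleGraph V) (A B : Finset V) :
    ecut G A B = ∑ a ∈ A, ((B.filter (G.Adj a)).card : ℝ) := by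
  classical
  unfold ecut
  have h : ((A ×ˢ B).filter fun p => G.Adj p.1 p.2) =
      A.biUnion (fun a => (B.filter (G.Adj a)).image (fun b => (a, b))) := by
    ext ⟨a, b⟩
    simp [and_assoc, and_comm, and_left_comm]
  rw [h, card_biUnion]
  · push_cast
    congr 1
    ext a
    rw [card_image_of_injective _ (fun x y h => by simpa using congrArg Prod.snd h)]
  · intro x hx y hy hxy
    simp only [disjoint_left]
    intro p hp hq
    simp only [mem_image] at hp hq
    obtain ⟨b, _, rfl⟩ := hp
    obtain ⟨b', _, h2⟩ := hq
    exact hxy (by simpa using (congrArg Prod.fst h2).symm)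

lemma ecut_nonneg (G : SimpleGraph V) (A B : Finset V) : 0 ≤ ecut G A B := by
  unfold ecut; positivity

lemma ecut_union_left (G : SimpleGraph V) {A A' : Finset V} (B : Finset V)
    (h : Disjoint A A') : ecut G (A ∪ A') B = ecut G A B + ecut G A' B := by
  rw [ecut_eq_sum, ecut_eq_sum, ecut_eq_sum, sum_union h]

lemma ecut_union_right (G : SimpleGraph V) (A : Finset V) {B B' : Finset V}
    (h : Disjoint B B') : ecut G A (B ∪ B') = ecut G A B + ecut G A B' := by
  rw [ecut_eq_sum, ecut_eq_sum, ecut_eq_sum, ← sum_add_distrib]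
  refine sum_congr rfl fun a _ => ?_
  rw [filter_union, ← Nat.cast_add, card_union_of_disjoint]
  exact disjoint_filter_filter h

lemma gvol_union (G : SimpleGraph V) {A B : Finset V} (h : Disjoint A B) :
    gvol G (A ∪ B) = gvol G A + gvol G B := by
  unfold gvol; rw [sum_union h]

lemma gvol_nonneg (G : SimpleGraph V) (A : Finset V) : 0 ≤ gvol G A := by
  unfold gvol; positivity

-- closure lemmas
variable {G : SimpleGraph V} {S : Finset V}

lemma ecut_zero_of_closed (hcl : ∀ a ∈ S, ∀ b, G.Adj a b → b ∈ S)
    {A B : Finset V} (hA : A ⊆ S) (hB : Disjoint B S) : ecut G A B = 0 := by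
  rw [ecut_eq_sum]
  refine sum_eq_zero fun a ha => ?_
  have : B.filter (G.Adj a) = ∅ := by
    refine filter_eq_empty_iff.2 fun b hb hab => ?_
    exact (disjoint_left.1 hB) hb (hcl a (hA ha) b hab)
  simp [this]

lemma ecut_sub_eq_gvol (hcl : ∀ a ∈ S, ∀ b, G.Adj a b → b ∈ S)
    {A : Finset V} (hA : A ⊆ S) : ecut G A S = gvol G A := by
  rw [ecut_eq_sum]
  refine sum_congr rfl fun a ha => ?_
  congr 1
  rw [← SimpleGraph.card_neighborFinset_eq_degree]
  congr 1
  ext b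
  simp only [mem_filter, SimpleGraph.mem_neighborFinset]
  exact ⟨fun h => h.2, fun h => ⟨hcl a (hA ha) b h, h⟩⟩

lemma ein_split (hcl : ∀ a ∈ S, ∀ b, G.Adj a b → b ∈ S) (A : Finset V) :
    ein G A = ein G (A ∩ S) + ein G (A \ S) := by
  have hd : Disjoint (A ∩ S) (A \ S) := disjoint_left.2 fun x hx hx' =>
    (mem_sdiff.1 hx').2 (mem_inter.1 hx).2
  have hu : A ∩ S ∪ A \ S = A := by
    ext x; simp only [mem_union, mem_inter, mem_sdiff]; tauto
  have hds : Disjoint (A \ S) S := disjoint_left.2 fun x hx => (mem_sdiff.1 hx).2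
  have h1 : ecut G (A ∩ S) (A \ S) = 0 :=
    ecut_zero_of_closed hcl inter_subset_right hds
  have h2 : ecut G (A \ S) (A ∩ S) = 0 := by
    rw [ecut_eq_sum]
    refine sum_eq_zero fun a ha => ?_
    have : (A ∩ S).filter (G.Adj a) = ∅ := by
      refine filter_eq_empty_iff.2 fun b hb hab => ?_
      exact (mem_sdiff.1 ha).2 (hcl b (mem_inter.1 hb).2 a hab.symm)
    simp [this]
  unfold ein
  conv_lhs => rw [← hu]
  rw [ecut_union_left _ _ hd, ecut_union_right _ _ hd, ecut_union_right _ _ hd,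
    h1, h2]
  ring

lemma gvol_split (G : SimpleGraph V) (S A : Finset V) :
    gvol G A = gvol G (A ∩ S) + gvol G (A \ S) := by
  have hd : Disjoint (A ∩ S) (A \ S) := disjoint_left.2 fun x hx hx' =>
    (mem_sdiff.1 hx').2 (mem_inter.1 hx).2
  have hu : A ∩ S ∪ A \ S = A := by
    ext x; simp only [mem_union, mem_inter, mem_sdiff]; tauto
  conv_lhs => rw [← hu]
  rw [gvol_union _ hd]

lemma sum_parts_inter (P : Finpartition (univ : Finset V)) (S : Finset V) (g : V → ℝ) :
    ∑ A ∈ P.parts, ∑ v ∈ A ∩ S, g v = ∑ v ∈ S, g v := by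
  classical
  have hbi : P.parts.biUnion (fun A => A ∩ S) = S := by
    ext x
    simp only [mem_biUnion, mem_inter]
    constructor
    · rintro ⟨A, _, _, hx⟩; exact hx
    · intro hx
      obtain ⟨A, hA, hxA⟩ := P.exists_mem (mem_univ x)
      exact ⟨A, hA, hxA, hx⟩
  have hd : (↑P.parts : Set (Finset V)).PairwiseDisjoint (fun A => A ∩ S) :=
    fun x hx y hy hxy =>
      (P.disjoint hx hy hxy).mono inter_subset_left inter_subset_left
  conv_rhs => rw [← hbi]
  rw [Finset.sum_biUnion hd]

lemma merge_partition (P : Finpartition (univ : Finset V)) {S : Finset V} (hS : S.Nonempty) :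
    ∃ Q : Finpartition (univ : Finset V),
      Q.parts = insert S ((P.parts.image (· \ S)).erase ∅) := by
  classical
  refine ⟨⟨insert S ((P.parts.image (· \ S)).erase ∅), ?_, ?_, ?_⟩, rfl⟩
  · rw [Finset.supIndep_iff_pairwiseDisjoint]
    intro x hx y hy hxy
    simp only [coe_insert, Set.mem_insert_iff, mem_coe, mem_erase, mem_image] at hx hy
    rcases hx with rfl | ⟨hxne, A, hA, rfl⟩
    · rcases hy with rfl | ⟨hyne, B, hB, rfl⟩
      · exact absurd rfl hxy
      · exact disjoint_sdiff
    · rcases hy with rfl | ⟨hyne, B, hB, rfl⟩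
      · exact disjoint_sdiff.symm
      · have hAB : A ≠ B := fun h => hxy (by rw [h])
        exact (P.disjoint hA hB hAB).mono sdiff_subset sdiff_subset
  · apply le_antisymm
    · exact Finset.sup_le fun A _ => le_top
    · intro x _
      rw [Finset.mem_sup]
      by_cases hx : x ∈ S
      · exact ⟨S, mem_insert_self _ _, hx⟩
      · obtain ⟨A, hA, hxA⟩ := P.exists_mem (mem_univ x)
        refine ⟨A \ S, ?_, mem_sdiff.2 ⟨hxA, hx⟩⟩
        refine mem_insert_of_mem (mem_erase.2 ⟨?_, mem_image_of_mem _ hA⟩)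
        intro h
        exact absurd (h ▸ mem_sdiff.2 ⟨hxA, hx⟩) (notMem_empty x)
  · intro h
    rcases mem_insert.1 h with h | h
    · exact hS.ne_empty h.symm
    · exact (mem_erase.1 h).1 rfl

lemma sum_merge (P : Finpartition (univ : Finset V)) {S : Finset V} (hS : S.Nonempty)
    (f : Finset V → ℝ) (hf : f ∅ = 0) :
    ∑ B ∈ insert S ((P.parts.image (· \ S)).erase ∅), f B
      = f S + ∑ A ∈ P.parts, f (A \ S) := by
  classical
  have hSnot : S ∉ (P.parts.image (· \ S)).erase ∅ := by
    intro h
    obtain ⟨A, _, hAS⟩ := mem_image.1 (mem_of_mem_erase h)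
    obtain ⟨s, hs⟩ := hS
    exact (mem_sdiff.1 (hAS ▸ hs)).2 hs
  rw [sum_insert hSnot]
  congr 1
  have himg : (P.parts.image (· \ S)).erase ∅
      = (P.parts.filter fun A => (A \ S).Nonempty).image (· \ S) := by
    ext B
    simp only [mem_erase, mem_image, mem_filter]
    constructor
    · rintro ⟨hB, A, hA, rfl⟩
      exact ⟨A, ⟨hA, nonempty_iff_ne_empty.2 hB⟩, rfl⟩
    · rintro ⟨A, ⟨hA, hne⟩, rfl⟩
      exact ⟨nonempty_iff_ne_empty.1 hne, A, hA, rfl⟩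
  rw [himg, sum_image, sum_filter_of_ne]
  · intro A _ hfA
    rw [nonempty_iff_ne_empty]
    intro h
    exact hfA (h ▸ hf)
  · intro A hA B hB h
    simp only [mem_coe, mem_filter] at hA hB
    by_contra hne
    obtain ⟨x, hx⟩ := hA.2
    have hx' : x ∈ B \ S := (show A \ S = B \ S from h) ▸ hx
    exact absurd ((P.disjoint hA.1 hB.1 hne).le_bot
      (mem_inter.2 ⟨(mem_sdiff.1 hx).1, (mem_sdiff.1 hx').1⟩)) (notMem_empty x)

instance finpartition_finite : Finite (Finpartition (univ : Finset V)) :=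
  Finite.of_injective (fun P => P.parts) fun P Q h => Finpartition.ext h


/-- If `H` is a connected component of `G` (vertex set `S`) with
`e(H)/e(G) < ĥ_H`, then no modularity-optimal partition of `G` splits `H`. -/
theorem stmt10 {V : Type*} [Fintype V] (G : SimpleGraph V) (hG : G.edgeFinset.Nonempty)
    (c : G.ConnectedComponent) (S : Finset V)
    (hS : S = univ.filter fun v => G.connectedComponentMk v = c)
    (hlt : ein G S / edgecount G < hhatOn G S) :
    ∀ P : Finpartition (univ : Finset V), modScore G P = modularity G →
      ∃ A ∈ P.parts, S ⊆ A := by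
  classical
  intro P hP
  by_contra hno
  push_neg at hno
  -- basic facts
  have hm : 0 < edgecount G := by
    unfold edgecount
    exact_mod_cast card_pos.2 hG
  have hcl : ∀ a ∈ S, ∀ b, G.Adj a b → b ∈ S := by
    subst hS
    intro a ha b hab
    simp only [mem_filter, mem_univ, true_and] at ha ⊢
    rw [← ha]
    exact (SimpleGraph.ConnectedComponent.eq).2 hab.symm.reachable
  obtain ⟨v, hv⟩ := c.exists_rep
  have hvS : v ∈ S := by
    rw [hS]; simp only [mem_filter, mem_univ, true_and]; exact hv
  obtain ⟨A₀, hA₀, hvA₀⟩ := P.exists_mem (mem_univ v)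
  obtain ⟨w, hwS, hwA₀⟩ := Finset.not_subset.1 (hno A₀ hA₀)
  have hwv : w ≠ v := fun h => hwA₀ (h ▸ hvA₀)
  -- every vertex of S has positive degree
  have hdeg : ∀ u ∈ S, (0:ℝ) < G.degree u := by
    intro u hu
    have hucomp : G.connectedComponentMk u = c := by
      rw [hS] at hu; exact (mem_filter.1 hu).2
    obtain ⟨t, htS, htu⟩ : ∃ t, t ∈ S ∧ t ≠ u := by
      by_cases h : u = v
      · exact ⟨w, hwS, fun hh => hwv (hh.trans h)⟩
      · exact ⟨v, hvS, fun hh => h hh.symm⟩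
    have htcomp : G.connectedComponentMk t = c := by
      rw [hS] at htS; exact (mem_filter.1 htS).2
    have hreach : G.Reachable u t :=
      SimpleGraph.ConnectedComponent.exact (hucomp.trans htcomp.symm)
    have : 0 < G.degree u := by
      rw [G.degree_pos_iff_exists_adj]
      obtain ⟨p⟩ := hreach
      cases p with
      | nil => exact absurd rfl htu
      | cons h q => exact ⟨_, h⟩
    exact_mod_cast this
  have hvolpos : ∀ U : Finset V, U ⊆ S → U.Nonempty → 0 < gvol G U := by
    intro U hUS hUne
    exact Finset.sum_pos (fun i hi => hdeg i (hUS hi)) hUne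
  have hSne : S.Nonempty := ⟨v, hvS⟩
  set m := edgecount G with hmdef
  set volS := gvol G S with hvolSdef
  have hvolS : 0 < volS := hvolpos S Subset.rfl hSne
  -- the parts meeting S
  set T := P.parts.filter (fun A => (A ∩ S).Nonempty) with hTdef
  have hA₀T : A₀ ∈ T := mem_filter.2 ⟨hA₀, ⟨v, mem_inter.2 ⟨hvA₀, hvS⟩⟩⟩
  have hTne : T.Nonempty := ⟨A₀, hA₀T⟩
  -- facts about each A ∈ T
  have hneS : ∀ A ∈ T, A ∩ S ≠ S := by
    intro A hA h
    exact hno A (mem_filter.1 hA).1 (fun x hx => (mem_inter.1 (h ▸ hx)).1)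
  have hUfacts : ∀ A ∈ T,
      gvol G (S \ (A ∩ S)) = volS - gvol G (A ∩ S) ∧
      0 < gvol G (A ∩ S) ∧ 0 < gvol G (S \ (A ∩ S)) := by
    intro A hA
    have hUS : (A ∩ S) ⊆ S := inter_subset_right
    have hUne : (A ∩ S).Nonempty := (mem_filter.1 hA).2
    have hun : (A ∩ S) ∪ (S \ (A ∩ S)) = S := union_sdiff_of_subset hUS
    have hdisj : Disjoint (A ∩ S) (S \ (A ∩ S)) := disjoint_sdiff
    have hsplit : volS = gvol G (A ∩ S) + gvol G (S \ (A ∩ S)) := by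
      conv_lhs => rw [hvolSdef, ← hun]
      exact gvol_union G hdisj
    have hne2 : (S \ (A ∩ S)).Nonempty := by
      rw [sdiff_nonempty]
      intro h
      exact hneS A hA (Subset.antisymm hUS h)
    exact ⟨by linarith [hsplit], hvolpos _ hUS hUne, hvolpos _ (sdiff_subset) hne2⟩
  -- key strict inequality for each A ∈ T
  have hein_S : ein G S = volS / 2 := by
    unfold ein
    rw [ecut_sub_eq_gvol hcl Subset.rfl]
  have hlb : ∀ x ∈ { x | ∃ U : Finset V, U ⊆ S ∧ U.Nonempty ∧ U ≠ S ∧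
      x = ecut G U (S \ U) * gvol G S / (gvol G U * gvol G (S \ U)) }, (0:ℝ) ≤ x := by
    rintro x ⟨U, _, _, _, rfl⟩
    exact div_nonneg (mul_nonneg (ecut_nonneg _ _ _) (gvol_nonneg _ _))
      (mul_nonneg (gvol_nonneg _ _) (gvol_nonneg _ _))
  have hkeyA : ∀ A ∈ T,
      gvol G (A ∩ S) * (volS - gvol G (A ∩ S)) / (2 * m)
        < ecut G (A ∩ S) (S \ (A ∩ S)) := by
    intro A hA
    obtain ⟨hvol2, hp1, hp2⟩ := hUfacts A hA
    have hub : hhatOn G S ≤ ecut G (A ∩ S) (S \ (A ∩ S)) * gvol G S /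
        (gvol G (A ∩ S) * gvol G (S \ (A ∩ S))) :=
      csInf_le ⟨0, hlb⟩ ⟨A ∩ S, inter_subset_right, (mem_filter.1 hA).2, hneS A hA, rfl⟩
    have h1 : volS / (2 * m) < ecut G (A ∩ S) (S \ (A ∩ S)) * volS /
        (gvol G (A ∩ S) * gvol G (S \ (A ∩ S))) := by
      calc volS / (2 * m) = ein G S / m := by rw [hein_S]; ring
        _ < hhatOn G S := hlt
        _ ≤ _ := hub
    have hp : 0 < gvol G (A ∩ S) * gvol G (S \ (A ∩ S)) := mul_pos hp1 hp2
    rw [div_lt_div_iff₀ (by positivity) hp] at h1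
    rw [div_lt_iff₀ (by positivity)]
    rw [← hvol2]
    nlinarith [h1, hvolS]
  -- identity: ecut U (S\U) = gvol U - 2 ein U
  have hecut_id : ∀ A ∈ T, ecut G (A ∩ S) (S \ (A ∩ S))
      = gvol G (A ∩ S) - 2 * ein G (A ∩ S) := by
    intro A hA
    have hUS : (A ∩ S) ⊆ S := inter_subset_right
    have hun : (A ∩ S) ∪ (S \ (A ∩ S)) = S := union_sdiff_of_subset hUS
    have hdisj : Disjoint (A ∩ S) (S \ (A ∩ S)) := disjoint_sdiff
    have h2 := ecut_union_right G (A ∩ S) hdisj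
    rw [hun, ecut_sub_eq_gvol hcl hUS] at h2
    unfold ein
    linarith [h2]
  -- sums over T vs sums over P.parts
  have hTsum : ∀ g : Finset V → ℝ, g ∅ = 0 →
      ∑ A ∈ T, g (A ∩ S) = ∑ A ∈ P.parts, g (A ∩ S) := by
    intro g hg
    refine sum_filter_of_ne fun A _ h => ?_
    rw [nonempty_iff_ne_empty]
    intro he
    exact h (he ▸ hg)
  have hein_empty : ein G ∅ = 0 := by simp [ein, ecut]
  have hgvol_empty : gvol G ∅ = 0 := by simp [gvol]
  have hvsum : ∑ A ∈ P.parts, gvol G (A ∩ S) = volS := by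
    rw [hvolSdef]; unfold gvol; exact sum_parts_inter P S _
  set E1 := ∑ A ∈ P.parts, ein G (A ∩ S) with hE1
  set W1 := ∑ A ∈ P.parts, (gvol G (A ∩ S))^2 with hW1
  -- combine: 2m(volS - 2 E1) > volS^2 - W1
  have hmain : (volS^2 - W1) / (2*m) < volS - 2*E1 := by
    have hsum1 : ∑ A ∈ T, gvol G (A ∩ S) * (volS - gvol G (A ∩ S)) / (2 * m)
        < ∑ A ∈ T, ecut G (A ∩ S) (S \ (A ∩ S)) :=
      sum_lt_sum_of_nonempty hTne hkeyA
    have hsum2 : ∑ A ∈ T, ecut G (A ∩ S) (S \ (A ∩ S)) = volS - 2*E1 := by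
      rw [sum_congr rfl hecut_id, sum_sub_distrib, ← mul_sum,
        hTsum (fun B => gvol G B) hgvol_empty,
        hTsum (fun B => ein G B) hein_empty, hvsum, hE1]
    have hsum3 : ∑ A ∈ T, gvol G (A ∩ S) * (volS - gvol G (A ∩ S)) / (2 * m)
        = (volS^2 - W1) / (2*m) := by
      rw [← sum_div]
      congr 1
      have : ∀ A ∈ T, gvol G (A ∩ S) * (volS - gvol G (A ∩ S))
          = gvol G (A ∩ S) * volS - (gvol G (A ∩ S))^2 := by
        intro A _; ring
      rw [sum_congr rfl this, sum_sub_distrib, ← sum_mul,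
        hTsum (fun B => gvol G B) hgvol_empty,
        hTsum (fun B => (gvol G B)^2) (by simp [hgvol_empty]), hvsum, hW1]
      ring
    rw [← hsum2, ← hsum3]
    exact hsum1
  -- build the merged partition Q
  obtain ⟨Q, hQ⟩ := merge_partition P hSne
  set E2 := ∑ A ∈ P.parts, ein G (A \ S) with hE2
  set W2 := ∑ A ∈ P.parts, (gvol G (A \ S))^2 with hW2
  set X := ∑ A ∈ P.parts, gvol G (A ∩ S) * gvol G (A \ S) with hX
  have hXnn : 0 ≤ X :=
    sum_nonneg fun A _ => mul_nonneg (gvol_nonneg _ _) (gvol_nonneg _ _)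
  have heQ : modScore G Q = (ein G S + E2) / m - (volS^2 + W2) / (4 * m^2) := by
    unfold modScore
    rw [hQ, sum_merge P hSne (ein G) hein_empty,
      sum_merge P hSne (fun B => (gvol G B)^2) (by simp [hgvol_empty])]
  have heP : modScore G P = (E1 + E2) / m - (W1 + W2 + 2*X) / (4 * m^2) := by
    unfold modScore
    congr 1
    · congr 1
      rw [hE1, hE2, ← sum_add_distrib]
      exact sum_congr rfl fun A _ => ein_split hcl A
    · congr 1
      rw [hW1, hW2, hX, ← sum_add_distrib, mul_sum, ← sum_add_distrib]
      refine sum_congr rfl fun A _ => ?_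
      rw [gvol_split G S A]
      ring
  -- strict improvement
  have himpr : modScore G P < modScore G Q := by
    rw [heP, heQ, hein_S]
    have hkey : volS^2 - W1 < (volS - 2*E1) * (2*m) := (div_lt_iff₀ (by positivity)).1 hmain
    have hdiff : (volS/2 + E2) / m - (volS^2 + W2) / (4 * m^2)
        - ((E1 + E2) / m - (W1 + W2 + 2*X) / (4 * m^2))
        = ((volS - 2*E1) * (2*m) - (volS^2 - W1) + 2*X) / (4 * m^2) := by
      field_simp
      ring
    have hpos : 0 < ((volS - 2*E1) * (2*m) - (volS^2 - W1) + 2*X) / (4 * m^2) :=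
      div_pos (by linarith) (by positivity)
    linarith [hdiff ▸ hpos]
  -- contradiction with optimality
  have hle : modScore G Q ≤ modScore G P := by
    rw [hP]
    apply le_csSup
    · have h : {x | ∃ R : Finpartition (univ : Finset V), x = modScore G R}
          = Set.range (modScore G) := by
        ext x; simp [eq_comm]
      rw [h]
      exact (Set.finite_range _).bddAbove
    · exact ⟨Q, rfl⟩
  linarith
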